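/- arXiv:1904.09182 — 2 statements merged into one kernel-verified Lean document; each statement's English description precedes it below -/
import Mathlib

section
/- For every s > 1/2 there exist constants c_s, C_s > 0 and δ₀ ∈ (0,1) such that for every δ ∈ (0, δ₀): (i) ‖V^δ(t)‖_{H^s} ≤ C_s ‖V^δ(t^δ)‖_{H^s} for every t ∈ [0, t^δ], and (ii) c_s · δ^{1−2s} ≤ ‖V^δ(t^δ)‖_{H^s} ≤ C_s · δ^{1−2s}, where t^δ = π/(2ω) = π/(δ√(4+δ²)). -/
/-- Squared `H^s` norm of a sequence of Fourier coefficients. -/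
noncomputable def hsNormSq (s : ℝ) (v : ℕ → ℂ) : ℝ :=
  ∑' k : ℕ, (1 + (k : ℝ) ^ 2) ^ s * ‖v k‖ ^ 2

/-- `H^s` norm of a sequence of Fourier coefficients. -/
noncomputable def hsNorm (s : ℝ) (v : ℕ → ℂ) : ℝ :=
  Real.sqrt (hsNormSq s v)

/-- Membership in `H^s₊`. -/
def InHs (s : ℝ) (v : ℕ → ℂ) : Prop :=
  Summable fun k : ℕ => (1 + (k : ℝ) ^ 2) ^ s * ‖v k‖ ^ 2

/-- The `k`-th Fourier coefficient of `Π(|v|²v)`: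
the sum over `k₁ - k₂ + k₃ = k` of `v_{k₁} * conj v_{k₂} * v_{k₃}`. -/
noncomputable def cubicTerm (v : ℕ → ℂ) (k : ℕ) : ℂ :=
  ∑' p : ℕ × ℕ × ℕ,
    if p.1 + p.2.2 = k + p.2.1 then v p.1 * (starRingEnd ℂ) (v p.2.1) * v p.2.2 else 0

/-- Absolute convergence of the sum defining `cubicTerm v k`. -/
def CubicSummable (v : ℕ → ℂ) (k : ℕ) : Prop :=
  Summable fun p : ℕ × ℕ × ℕ =>
    ‖if p.1 + p.2.2 = k + p.2.1 then v p.1 * (starRingEnd ℂ) (v p.2.1) * v p.2.2 else 0‖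

/-- Continuity of `t ↦ u(t)` as a curve with values in `H^s₊`. -/
def HsContinuous (s : ℝ) (u : ℝ → ℕ → ℂ) : Prop :=
  ∀ t₀ : ℝ, ∀ δ : ℝ, 0 < δ → ∃ η > 0, ∀ t : ℝ, |t - t₀| < η →
    hsNorm s (fun k => u t k - u t₀ k) < δ

/-- `u ∈ C(ℝ, H^s₊)` is a solution of the NLS–Szegő equation
`i ∂ₜ u + ε^α ∂ₓ² u = Π(|u|²u)`, written on Fourier coefficients. -/
def IsSolutionNLSSzego (s ε α : ℝ) (u : ℝ → ℕ → ℂ) : Prop :=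
  (∀ t : ℝ, InHs s (u t)) ∧ HsContinuous s u ∧
  ∀ t : ℝ, ∀ k : ℕ, CubicSummable (u t) k ∧
    HasDerivAt (fun τ : ℝ => u τ k)
      (-Complex.I * (((ε ^ α * (k : ℝ) ^ 2 : ℝ) : ℂ) * u t k + cubicTerm (u t) k)) t

/-- `ω = δ√(1+δ²/4)`. -/
noncomputable def omg (δ : ℝ) : ℝ := δ * Real.sqrt (1 + δ ^ 2 / 4)

/-- `a^δ(t) = e^{-it(1+δ²)}`. -/
noncomputable def aDel (δ t : ℝ) : ℂ :=
  Complex.exp (-Complex.I * ((t * (1 + δ ^ 2) : ℝ) : ℂ))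

/-- `b^δ(t) = e^{-it(1+δ²/2)}(δ cos(ωt) - i((2+δ²)/√(4+δ²)) sin(ωt))`. -/
noncomputable def bDel (δ t : ℝ) : ℂ :=
  Complex.exp (-Complex.I * ((t * (1 + δ ^ 2 / 2) : ℝ) : ℂ)) *
    (((δ : ℝ) : ℂ) * ((Real.cos (omg δ * t) : ℝ) : ℂ) -
      Complex.I * (((2 + δ ^ 2) / Real.sqrt (4 + δ ^ 2) : ℝ) : ℂ) *
        ((Real.sin (omg δ * t) : ℝ) : ℂ))

/-- `p^δ(t) = -(2i/√(4+δ²)) sin(ωt) e^{-itδ²/2}`. -/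
noncomputable def pDel (δ t : ℝ) : ℂ :=
  -(2 * Complex.I / ((Real.sqrt (4 + δ ^ 2) : ℝ) : ℂ)) *
    ((Real.sin (omg δ * t) : ℝ) : ℂ) *
    Complex.exp (-Complex.I * ((t * δ ^ 2 / 2 : ℝ) : ℂ))

/-- Fourier coefficients of the explicit solution
`V^δ(t,x) = (a^δ(t)e^{ix} + b^δ(t))/(1 - p^δ(t)e^{ix})` of the cubic Szegő
equation with initial datum `e^{ix} + δ`. -/
noncomputable def Vdel (δ t : ℝ) : ℕ → ℂ := fun k =>
  if k = 0 then bDel δ t else (aDel δ t + bDel δ t * pDel δ t) * pDel δ t ^ (k - 1)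

/-!
Past its constant term `V^δ(t)` is a geometric sequence, so with `q = |p^δ(t)|²`
`‖V^δ(t)‖²_{H^s} = |b^δ|² + |a^δ + b^δ p^δ|² ∑ⱼ (1 + (j+1)²)^s qʲ`.
The explicit formulas give `|a^δ + b^δ p^δ| = 1 - q` and `|b^δ|² = 1 + δ² - (1 - q)`, and the
weighted geometric series has size `(1 - q)^{-(2s+1)}`, so `‖V^δ(t)‖²_{H^s} ≈ (1 - q)^{1-2s}` up
to a bounded term. Finally `1 - q = (4 cos²(ωt) + δ²)/(4 + δ²)` is at least `δ²/5` at all times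
and equals `δ²/(4 + δ²)` at `t^δ`, where `ω t^δ = π/2`.
-/

open Real

lemma rpow_le_rpow_mul_exp {x r : ℝ} (hx : 0 ≤ x) (hr : 0 < r) : x ^ r ≤ r ^ r * exp x := by
  have hxr : x / r ≤ exp (x / r) := (le_add_of_nonneg_right zero_le_one).trans (add_one_le_exp _)
  calc x ^ r = r ^ r * (x / r) ^ r := by
        rw [div_rpow hx hr.le, mul_div_cancel₀ _ (rpow_pos_of_pos hr r).ne']
    _ ≤ r ^ r * exp (x / r) ^ r := by gcongr
    _ = r ^ r * exp x := by rw [← exp_mul, div_mul_cancel₀ x hr.ne']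

lemma inv_one_sub_exp_neg_le {u : ℝ} (hu : 0 < u) : (1 - exp (-u))⁻¹ ≤ exp u / u := by
  have h : 1 - exp (-u) = (exp u - 1) / exp u := by
    rw [exp_neg]; field_simp
  rw [h, inv_div]
  gcongr
  linarith [add_one_le_exp u]

lemma sq_mul_rpow_neg {x : ℝ} (hx : 0 < x) (s : ℝ) :
    x ^ 2 * x ^ (-(2 * s + 1)) = x ^ (1 - 2 * s) := by
  rw [← rpow_natCast, ← rpow_add hx]
  norm_num
  ring_nf

noncomputable def weightedGeomSum (s q : ℝ) : ℝ := ∑' j : ℕ, (1 + ((j : ℝ) + 1) ^ 2) ^ s * q ^ j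

lemma weight_mul_pow_le {s q : ℝ} (hs : 0 < s) (hq0 : 0 ≤ q) (hq1 : q < 1) (j : ℕ) :
    (1 + ((j : ℝ) + 1) ^ 2) ^ s * q ^ j ≤
      2 ^ s * (4 * s / (1 - q)) ^ (2 * s) * exp ((1 - q) / 2) * exp (-((1 - q) / 2)) ^ j := by
  set y := 1 - q
  have hy0 : 0 < y := by linarith
  have hj : (0 : ℝ) ≤ (j : ℝ) + 1 := by positivity
  have hweight : (1 + ((j : ℝ) + 1) ^ 2) ^ s ≤ 2 ^ s * ((j : ℝ) + 1) ^ (2 * s) := by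
    calc (1 + ((j : ℝ) + 1) ^ 2) ^ s ≤ (2 * ((j : ℝ) + 1) ^ 2) ^ s := by
          gcongr; nlinarith [(j.cast_nonneg : (0 : ℝ) ≤ j)]
      _ = 2 ^ s * ((j : ℝ) + 1) ^ (2 * s) := by
          rw [mul_rpow zero_le_two (by positivity), rpow_mul hj, rpow_two]
  have hpoly : ((j : ℝ) + 1) ^ (2 * s) ≤ (4 * s / y) ^ (2 * s) * exp (y / 2 * ((j : ℝ) + 1)) := by
    have h := rpow_le_rpow_mul_exp (mul_nonneg (div_nonneg hy0.le zero_le_two) hj)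
      (by positivity : 0 < 2 * s)
    rw [mul_rpow (by positivity) hj] at h
    have hbase : (4 * s / y) ^ (2 * s) = (2 * s) ^ (2 * s) / (y / 2) ^ (2 * s) := by
      rw [← div_rpow (by positivity) (by positivity)]; congr 1; field_simp; ring
    rw [hbase, div_mul_eq_mul_div, le_div_iff₀ (by positivity), mul_comm]
    exact h
  -- half of the decay `q ^ j ≤ exp (-y j)` absorbs the polynomial weight
  have hgeom : q ^ j ≤ exp (-y) ^ j := by
    gcongr; linarith [add_one_le_exp (-y)]
  calc (1 + ((j : ℝ) + 1) ^ 2) ^ s * q ^ j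
      ≤ 2 ^ s * ((4 * s / y) ^ (2 * s) * exp (y / 2 * ((j : ℝ) + 1))) * exp (-y) ^ j := by
        gcongr; exact hweight.trans (by gcongr)
    _ = _ := by
        rw [← exp_nat_mul, ← exp_nat_mul, mul_assoc, mul_assoc, mul_assoc, ← exp_add, ← exp_add]
        ring_nf

lemma summable_weight_mul_pow {s q : ℝ} (hs : 0 < s) (hq0 : 0 ≤ q) (hq1 : q < 1) :
    Summable fun j : ℕ => (1 + ((j : ℝ) + 1) ^ 2) ^ s * q ^ j :=
  Summable.of_nonneg_of_le (fun j => by positivity) (weight_mul_pow_le hs hq0 hq1)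
    ((summable_geometric_of_lt_one (exp_pos _).le (exp_lt_one_iff.mpr (by linarith))).mul_left _)

lemma weightedGeomSum_le {s q : ℝ} (hs : 0 < s) (hq0 : 0 ≤ q) (hq1 : q < 1) :
    weightedGeomSum s q ≤ 2 ^ (s + 1) * exp 1 * (4 * s) ^ (2 * s) * (1 - q) ^ (-(2 * s + 1)) := by
  set y := 1 - q
  have hy0 : 0 < y := by linarith
  have hρ : exp (-(y / 2)) < 1 := exp_lt_one_iff.mpr (by linarith)
  calc weightedGeomSum s q
      ≤ ∑' j : ℕ, 2 ^ s * (4 * s / y) ^ (2 * s) * exp (y / 2) * exp (-(y / 2)) ^ j :=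
        (summable_weight_mul_pow hs hq0 hq1).tsum_le_tsum (weight_mul_pow_le hs hq0 hq1)
          ((summable_geometric_of_lt_one (exp_pos _).le hρ).mul_left _)
    _ = 2 ^ s * (4 * s / y) ^ (2 * s) * exp (y / 2) * (1 - exp (-(y / 2)))⁻¹ := by
        rw [tsum_mul_left, tsum_geometric_of_lt_one (exp_pos _).le hρ]
    _ ≤ 2 ^ s * (4 * s / y) ^ (2 * s) * exp (y / 2) * (exp (y / 2) / (y / 2)) := by
        gcongr; exact inv_one_sub_exp_neg_le (by positivity)
    _ = 2 ^ (s + 1) * exp y * (4 * s) ^ (2 * s) * (y ^ (-(2 * s)) * y⁻¹) := by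
        rw [div_rpow (by positivity) hy0.le, rpow_neg hy0.le, rpow_add_one two_ne_zero,
          ← add_halves y, exp_add, add_halves]
        field_simp
    _ ≤ 2 ^ (s + 1) * exp 1 * (4 * s) ^ (2 * s) * y ^ (-(2 * s + 1)) := by
        rw [neg_add, rpow_add hy0, rpow_neg_one]
        gcongr
        linarith

lemma le_weightedGeomSum {s q : ℝ} (hs : 0 < s) (hq0 : 4 / 5 ≤ q) (hq1 : q < 1) :
    (4 * (1 - q)) ^ (-(2 * s + 1)) / 10 ≤ weightedGeomSum s q := by
  set x := 4 * (1 - q)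
  have hx0 : 0 < x := by linarith
  -- the block `M ≤ j < 2 M` with `M ≈ 1 / x` already has the full size: there the weight is
  -- at least `x ^ (-2 s)` and, by Bernoulli, `q ^ j ≥ 1 / 10`
  set M := ⌈x⁻¹⌉₊
  have hM_ge : x⁻¹ ≤ M := Nat.le_ceil _
  have hM_lt : (M : ℝ) < x⁻¹ + 1 := Nat.ceil_lt_add_one (by positivity)
  have hterm : ∀ j ∈ Finset.Ico M (2 * M),
      x ^ (-(2 * s)) * (1 / 10) ≤ (1 + ((j : ℝ) + 1) ^ 2) ^ s * q ^ j := by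
    intro j hj
    obtain ⟨hMj, hj2M⟩ := Finset.mem_Ico.mp hj
    have hMj' : (M : ℝ) ≤ j := by exact_mod_cast hMj
    have hweight : x ^ (-(2 * s)) ≤ (1 + ((j : ℝ) + 1) ^ 2) ^ s := by
      calc x ^ (-(2 * s)) = (x⁻¹) ^ (2 * s) := by rw [rpow_neg hx0.le, inv_rpow hx0.le]
        _ ≤ ((j : ℝ) + 1) ^ (2 * s) := by gcongr; linarith
        _ = (((j : ℝ) + 1) ^ 2) ^ s := by rw [rpow_mul (by positivity), rpow_two]
        _ ≤ (1 + ((j : ℝ) + 1) ^ 2) ^ s := by gcongr; linarith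
    have hpow : 1 / 10 ≤ q ^ j := by
      have hbern := one_add_mul_sub_le_pow (by linarith : (-1 : ℝ) ≤ q) (2 * M)
      have hmono : q ^ (2 * M) ≤ q ^ j := pow_le_pow_of_le_one (by linarith) hq1.le hj2M.le
      have h2M : ((2 * M : ℕ) : ℝ) * (1 - q) ≤ 9 / 10 := by
        have hMx := mul_lt_mul_of_pos_right hM_lt hx0
        rw [add_mul, inv_mul_cancel₀ hx0.ne', one_mul] at hMx
        push_cast
        linarith
      nlinarith
    exact mul_le_mul hweight hpow (by norm_num) (by positivity)
  have hsum := (Finset.card_nsmul_le_sum _ _ _ hterm).trans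
    ((summable_weight_mul_pow hs (by linarith) hq1).sum_le_tsum (Finset.Ico M (2 * M))
      (fun j _ => by positivity))
  rw [Nat.card_Ico, show 2 * M - M = M by omega, nsmul_eq_mul] at hsum
  calc x ^ (-(2 * s + 1)) / 10 = x⁻¹ * (x ^ (-(2 * s)) * (1 / 10)) := by
        rw [neg_add, rpow_add hx0, rpow_neg_one]; ring
    _ ≤ M * (x ^ (-(2 * s)) * (1 / 10)) := by gcongr
    _ ≤ weightedGeomSum s q := hsum

lemma hsNormSq_ite_zero_mul_pow {s : ℝ} (hs : 0 < s) (b c p : ℂ) (hp : ‖p‖ < 1) :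
    hsNormSq s (fun k => if k = 0 then b else c * p ^ (k - 1)) =
      ‖b‖ ^ 2 + ‖c‖ ^ 2 * weightedGeomSum s (‖p‖ ^ 2) := by
  have hshift : ∀ j : ℕ, (1 + (((j + 1 : ℕ) : ℝ)) ^ 2) ^ s *
      ‖(if j + 1 = 0 then b else c * p ^ (j + 1 - 1))‖ ^ 2 =
      ‖c‖ ^ 2 * ((1 + ((j : ℝ) + 1) ^ 2) ^ s * (‖p‖ ^ 2) ^ j) := by
    intro j
    simp only [Nat.add_eq_zero_iff, one_ne_zero, and_false, if_false, Nat.add_sub_cancel,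
      norm_mul, norm_pow, Nat.cast_succ]
    ring
  have hsum := summable_weight_mul_pow hs (by positivity)
    (pow_lt_one₀ (norm_nonneg p) hp two_ne_zero)
  rw [hsNormSq, tsum_eq_zero_add' (by simpa only [hshift] using hsum.mul_left (‖c‖ ^ 2)),
    tsum_congr hshift, tsum_mul_left, weightedGeomSum]
  simp

lemma norm_exp_neg_I_mul (x : ℝ) : ‖Complex.exp (-Complex.I * x)‖ = 1 := by
  simp [Complex.norm_exp]

lemma sqrt_four_add_sq_sq (δ : ℝ) : √(4 + δ ^ 2) ^ 2 = 4 + δ ^ 2 := sq_sqrt (by positivity)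

lemma norm_pDel_sq (δ t : ℝ) : ‖pDel δ t‖ ^ 2 = 4 * sin (omg δ * t) ^ 2 / (4 + δ ^ 2) := by
  have hr : 0 < √(4 + δ ^ 2) := sqrt_pos.mpr (by positivity)
  simp only [pDel, norm_mul, norm_neg, norm_div, norm_exp_neg_I_mul, Complex.norm_real,
    Complex.norm_I, Complex.norm_ofNat, norm_eq_abs, abs_of_pos hr]
  rw [mul_one, mul_one, mul_pow, div_pow, sq_abs, sqrt_four_add_sq_sq]
  ring

lemma one_sub_norm_pDel_sq (δ t : ℝ) :
    1 - ‖pDel δ t‖ ^ 2 = (4 * cos (omg δ * t) ^ 2 + δ ^ 2) / (4 + δ ^ 2) := by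
  rw [norm_pDel_sq]
  field_simp
  linear_combination (-4 : ℝ) * sin_sq_add_cos_sq (omg δ * t)

lemma norm_pDel_lt_one {δ : ℝ} (hδ : 0 < δ) (t : ℝ) : ‖pDel δ t‖ < 1 := by
  have h : 0 < 1 - ‖pDel δ t‖ ^ 2 := by rw [one_sub_norm_pDel_sq]; positivity
  exact (sq_lt_one_iff₀ (norm_nonneg _)).mp (by linarith)

lemma aDel_add_bDel_mul_pDel (δ t : ℝ) :
    aDel δ t + bDel δ t * pDel δ t = Complex.exp (-Complex.I * ((t * (1 + δ ^ 2) : ℝ) : ℂ)) *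
      (1 - 2 * Complex.I / (√(4 + δ ^ 2) : ℝ) * (sin (omg δ * t) : ℝ) *
        ((δ : ℂ) * (cos (omg δ * t) : ℝ) -
          Complex.I * (((2 + δ ^ 2) / √(4 + δ ^ 2) : ℝ) : ℂ) * (sin (omg δ * t) : ℝ))) := by
  have hexp : Complex.exp (-Complex.I * ((t * (1 + δ ^ 2) : ℝ) : ℂ)) =
      Complex.exp (-Complex.I * ((t * (1 + δ ^ 2 / 2) : ℝ) : ℂ)) *
        Complex.exp (-Complex.I * ((t * δ ^ 2 / 2 : ℝ) : ℂ)) := by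
    rw [← Complex.exp_add]; congr 1; push_cast; ring
  rw [aDel, bDel, pDel, hexp]
  ring

lemma norm_aDel_add_bDel_mul_pDel_sq (δ t : ℝ) :
    ‖aDel δ t + bDel δ t * pDel δ t‖ ^ 2 = (1 - ‖pDel δ t‖ ^ 2) ^ 2 := by
  have hr : 0 < √(4 + δ ^ 2) := sqrt_pos.mpr (by positivity)
  have hr2 := sqrt_four_add_sq_sq δ
  have hsc := sin_sq_add_cos_sq (omg δ * t)
  rw [aDel_add_bDel_mul_pDel, norm_mul, norm_exp_neg_I_mul, one_mul, norm_pDel_sq]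
  generalize √(4 + δ ^ 2) = r at hr hr2 ⊢
  generalize sin (omg δ * t) = σ at hsc ⊢
  generalize cos (omg δ * t) = c at hsc ⊢
  have hcoord : (1 - 2 * Complex.I / (r : ℂ) * (σ : ℂ) * ((δ : ℂ) * (c : ℂ) -
      Complex.I * (((2 + δ ^ 2) / r : ℝ) : ℂ) * (σ : ℂ))) =
      ((1 - 2 * (2 + δ ^ 2) * σ ^ 2 / r ^ 2 : ℝ) : ℂ) +
        ((-(2 * δ * c * σ / r)) : ℝ) * Complex.I := by
    have hr' : (r : ℂ) ≠ 0 := by exact_mod_cast hr.ne'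
    push_cast
    field_simp
    ring_nf
    rw [Complex.I_sq]
    ring
  rw [hcoord, Complex.sq_norm, Complex.normSq_add_mul_I, neg_sq, div_pow _ r, hr2]
  field_simp
  linear_combination (4 * δ ^ 2 * σ ^ 2 * (4 + δ ^ 2)) * hsc

-- conservation of mass: `‖V‖²_{L²} = ‖b‖² + ‖a + b p‖² / (1 - ‖p‖²) = ‖e^{ix} + δ‖²_{L²} = 1 + δ²`
lemma norm_bDel_sq_add_one_sub_norm_pDel_sq (δ t : ℝ) :
    ‖bDel δ t‖ ^ 2 + (1 - ‖pDel δ t‖ ^ 2) = 1 + δ ^ 2 := by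
  have hr2 := sqrt_four_add_sq_sq δ
  have hsc := sin_sq_add_cos_sq (omg δ * t)
  have hcoord : ((δ : ℂ) * (cos (omg δ * t) : ℝ) -
      Complex.I * (((2 + δ ^ 2) / √(4 + δ ^ 2) : ℝ) : ℂ) * (sin (omg δ * t) : ℝ)) =
      ((δ * cos (omg δ * t) : ℝ) : ℂ) +
        ((-((2 + δ ^ 2) / √(4 + δ ^ 2) * sin (omg δ * t)) : ℝ) : ℂ) * Complex.I := by
    push_cast; ring
  rw [bDel, norm_mul, norm_exp_neg_I_mul, one_mul, hcoord, Complex.sq_norm,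
    Complex.normSq_add_mul_I, norm_pDel_sq, neg_sq, mul_pow, mul_pow, div_pow, hr2]
  field_simp
  linear_combination (4 + δ ^ 2) * δ ^ 2 * hsc

lemma omg_mul_peakTime {δ : ℝ} (hδ : 0 < δ) : omg δ * (π / (δ * √(4 + δ ^ 2))) = π / 2 := by
  have hsqrt : √(1 + δ ^ 2 / 4) = √(4 + δ ^ 2) / 2 := by
    rw [show 1 + δ ^ 2 / 4 = (4 + δ ^ 2) / 2 ^ 2 by ring, sqrt_div' _ (by positivity),
      sqrt_sq zero_le_two]
  have hr : 0 < √(4 + δ ^ 2) := sqrt_pos.mpr (by positivity)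
  rw [omg, hsqrt]
  field_simp

lemma hsNormSq_Vdel {s δ : ℝ} (hs : 0 < s) (hδ : 0 < δ) (t : ℝ) :
    hsNormSq s (Vdel δ t) =
      ‖bDel δ t‖ ^ 2 + (1 - ‖pDel δ t‖ ^ 2) ^ 2 * weightedGeomSum s (‖pDel δ t‖ ^ 2) := by
  rw [← norm_aDel_add_bDel_mul_pDel_sq]
  exact hsNormSq_ite_zero_mul_pow hs _ _ _ (norm_pDel_lt_one hδ t)

lemma hsNormSq_Vdel_le {s δ : ℝ} (hs : 1 / 2 < s) (hδ0 : 0 < δ) (hδ1 : δ ≤ 1) (t : ℝ) :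
    hsNormSq s (Vdel δ t) ≤
      (2 + 2 ^ (s + 1) * exp 1 * (4 * s) ^ (2 * s) * 5 ^ (2 * s - 1)) * (δ ^ (1 - 2 * s)) ^ 2 := by
  have hs0 : 0 < s := by linarith
  set q := ‖pDel δ t‖ ^ 2
  have hy : δ ^ 2 / 5 ≤ 1 - q := by
    rw [one_sub_norm_pDel_sq, div_le_div_iff₀ (by norm_num) (by positivity)]
    nlinarith [sq_nonneg (cos (omg δ * t)), pow_le_one₀ hδ0.le hδ1 (n := 2)]
  have hy0 : 0 < 1 - q := lt_of_lt_of_le (by positivity) hy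
  have hb : ‖bDel δ t‖ ^ 2 ≤ 2 := by
    nlinarith [norm_bDel_sq_add_one_sub_norm_pDel_sq δ t]
  have hrpow : (1 - q) ^ (1 - 2 * s) ≤ 5 ^ (2 * s - 1) * (δ ^ (1 - 2 * s)) ^ 2 := by
    calc (1 - q) ^ (1 - 2 * s) ≤ (δ ^ 2 / 5) ^ (1 - 2 * s) :=
          rpow_le_rpow_of_nonpos (by positivity) hy (by linarith)
      _ = 5 ^ (2 * s - 1) * (δ ^ (1 - 2 * s)) ^ 2 := by
          rw [div_rpow (by positivity) (by norm_num), ← rpow_pow_comm hδ0.le, div_eq_mul_inv,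
            ← rpow_neg (by norm_num), neg_sub, mul_comm]
  have hone : 1 ≤ (δ ^ (1 - 2 * s)) ^ 2 :=
    one_le_pow₀ (one_le_rpow_of_pos_of_le_one_of_nonpos hδ0 hδ1 (by linarith))
  calc hsNormSq s (Vdel δ t)
      = ‖bDel δ t‖ ^ 2 + (1 - q) ^ 2 * weightedGeomSum s q := hsNormSq_Vdel hs0 hδ0 t
    _ ≤ 2 + (1 - q) ^ 2 * (2 ^ (s + 1) * exp 1 * (4 * s) ^ (2 * s) * (1 - q) ^ (-(2 * s + 1))) := by
        gcongr
        exact weightedGeomSum_le hs0 (by positivity) (by linarith)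
    _ = 2 + 2 ^ (s + 1) * exp 1 * (4 * s) ^ (2 * s) * (1 - q) ^ (1 - 2 * s) := by
        rw [← sq_mul_rpow_neg hy0]; ring
    _ ≤ 2 * (δ ^ (1 - 2 * s)) ^ 2 +
          2 ^ (s + 1) * exp 1 * (4 * s) ^ (2 * s) * (5 ^ (2 * s - 1) * (δ ^ (1 - 2 * s)) ^ 2) := by
        gcongr; linarith
    _ = _ := by ring

lemma hsNormSq_Vdel_peakTime_ge {s δ : ℝ} (hs : 1 / 2 < s) (hδ0 : 0 < δ) (hδ1 : δ ≤ 1) :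
    (δ ^ (1 - 2 * s)) ^ 2 / 160 ≤ hsNormSq s (Vdel δ (π / (δ * √(4 + δ ^ 2)))) := by
  set t := π / (δ * √(4 + δ ^ 2))
  set q := ‖pDel δ t‖ ^ 2
  have hy : 1 - q = δ ^ 2 / (4 + δ ^ 2) := by
    rw [one_sub_norm_pDel_sq, omg_mul_peakTime hδ0, cos_pi_div_two]; ring
  have hy0 : 0 < 1 - q := by rw [hy]; positivity
  have hq0 : 4 / 5 ≤ q := by
    have : δ ^ 2 / (4 + δ ^ 2) ≤ 1 / 5 := by
      rw [div_le_div_iff₀ (by positivity) (by norm_num)]; nlinarith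
    linarith
  have h4y : 4 * (1 - q) ≤ δ ^ 2 := by
    rw [hy, mul_div_assoc', div_le_iff₀ (by positivity)]; nlinarith [sq_nonneg δ]
  calc (δ ^ (1 - 2 * s)) ^ 2 / 160 = (δ ^ 2) ^ (1 - 2 * s) / 160 := by
        rw [rpow_pow_comm hδ0.le]
    _ ≤ (4 * (1 - q)) ^ (1 - 2 * s) / 160 := by
        gcongr (?_ / _)
        exact rpow_le_rpow_of_nonpos (by positivity) h4y (by linarith)
    _ = (1 - q) ^ 2 * ((4 * (1 - q)) ^ (-(2 * s + 1)) / 10) := by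
        rw [← sq_mul_rpow_neg (by positivity : 0 < 4 * (1 - q))]; ring
    _ ≤ (1 - q) ^ 2 * weightedGeomSum s q := by
        gcongr; exact le_weightedGeomSum (by linarith) hq0 (by linarith)
    _ ≤ ‖bDel δ t‖ ^ 2 + (1 - q) ^ 2 * weightedGeomSum s q := le_add_of_nonneg_left (by positivity)
    _ = hsNormSq s (Vdel δ t) := (hsNormSq_Vdel (by linarith) hδ0 t).symm

/-- Growth of Sobolev norms for the cubic Szegő equation with initial datum
`e^{ix} + δ`: at time `t^δ = π/(δ√(4+δ²))` the `H^s` norm is of size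
`δ^{1-2s}`, and it is maximal (up to a constant) on `[0, t^δ]`. -/
theorem statement9 (s : ℝ) (hs : 1 / 2 < s) :
    ∃ c : ℝ, 0 < c ∧ ∃ C : ℝ, 0 < C ∧ ∃ δ₀ ∈ Set.Ioo (0 : ℝ) 1,
      ∀ δ ∈ Set.Ioo (0 : ℝ) δ₀, ∀ tδ : ℝ, tδ = Real.pi / (δ * Real.sqrt (4 + δ ^ 2)) →
        (∀ t ∈ Set.Icc (0 : ℝ) tδ, hsNorm s (Vdel δ t) ≤ C * hsNorm s (Vdel δ tδ)) ∧
        c * δ ^ (1 - 2 * s) ≤ hsNorm s (Vdel δ tδ) ∧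
        hsNorm s (Vdel δ tδ) ≤ C * δ ^ (1 - 2 * s) := by
  set A := 2 + 2 ^ (s + 1) * exp 1 * (4 * s) ^ (2 * s) * 5 ^ (2 * s - 1)
  have hA : 0 < A := by positivity
  refine ⟨(√160)⁻¹, by positivity, max √A (√A * √160), lt_max_of_lt_left (sqrt_pos.mpr hA),
    1 / 2, ⟨by norm_num, by norm_num⟩, ?_⟩
  rintro δ ⟨hδ0, hδ⟩ tδ rfl
  have hδ1 : δ ≤ 1 := by linarith
  have hx : 0 < δ ^ (1 - 2 * s) := rpow_pos_of_pos hδ0 _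
  have hupper : ∀ t, hsNorm s (Vdel δ t) ≤ √A * δ ^ (1 - 2 * s) := fun t => by
    rw [hsNorm, ← sqrt_sq hx.le, ← sqrt_mul hA.le]
    exact sqrt_le_sqrt (hsNormSq_Vdel_le hs hδ0 hδ1 t)
  have hlower : (√160)⁻¹ * δ ^ (1 - 2 * s) ≤ hsNorm s (Vdel δ (π / (δ * √(4 + δ ^ 2)))) := by
    rw [hsNorm, le_sqrt' (by positivity), mul_pow, inv_pow, sq_sqrt (by norm_num), inv_mul_eq_div]
    exact hsNormSq_Vdel_peakTime_ge hs hδ0 hδ1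
  refine ⟨fun t _ => ?_, hlower, (hupper _).trans (by gcongr; exact le_max_left _ _)⟩
  calc hsNorm s (Vdel δ t) ≤ √A * δ ^ (1 - 2 * s) := hupper t
    _ = √A * √160 * ((√160)⁻¹ * δ ^ (1 - 2 * s)) := by field_simp
    _ ≤ max √A (√A * √160) * hsNorm s (Vdel δ (π / (δ * √(4 + δ ^ 2)))) := by
        gcongr; exact le_max_right _ _
end

section
/- Let a, b, p ∈ ℂ with |p| < 1, and let (f_k)_{k∈ℕ} be the sequence f₀ = b and f_k = (a + bp)·p^{k−1} for k ≥ 1 (the Fourier coefficients of x ↦ (a e^{ix}+b)/(1 − p e^{ix})). Then Σ_{k≥1} k·|f_k|² = |a+bp|²/(1−|p|²)², and for every s > 1/2 there exist constants c_s, C_s > 0, independent of a, b, p, such that c_s·|a+bp|²/(1−|p|²)^{2s+1} ≤ Σ_{k≥1}(1+k²)^s·|f_k|² ≤ C_s·|a+bp|²/(1−|p|²)^{2s+1}. -/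
/-!
With `q = ‖p‖²` the coefficients after the zeroth satisfy `‖f_{k+1}‖² = ‖a + bp‖² q^k`, so both sums
are `‖a + bp‖²` times a weighted geometric series `∑ w(k+1) q^k`. For `w(k) = k` this series is
`(1 - q)⁻²`. For `w(k) = (1 + k²)^s` it is comparable to `(1 - q)^{-(2s+1)}`: from below by the
tangent-line (Bernoulli) inequality for the convex function `x ↦ x^{2s}` at the mean
`(1 - q)⁻¹` of the geometric weights, and from above because `x^{2s} ≤ C e^{(1-q)x/2} (1 - q)^{-2s}`
and `q^k ≤ e^{-(1-q)k}` turn the series into a geometric one of ratio `e^{-(1-q)/2}`.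
-/

/-- Fourier coefficients of `x ↦ (a e^{ix} + b)/(1 - p e^{ix})`:
`f₀ = b` and `f_k = (a + bp) p^{k-1}` for `k ≥ 1`. -/
noncomputable def hardyCoef (a b p : ℂ) : ℕ → ℂ := fun k =>
  if k = 0 then b else (a + b * p) * p ^ (k - 1)

open Real

theorem hasSum_succ_mul_geometric_of_norm_lt_one {𝕜 : Type*} [NormedDivisionRing 𝕜] {r : 𝕜}
    (hr : ‖r‖ < 1) : HasSum (fun n : ℕ ↦ ((n : 𝕜) + 1) * r ^ n) (1 / (1 - r) ^ 2) := by
  simpa using hasSum_choose_mul_geometric_of_norm_lt_one 1 hr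

namespace Real

theorem rpow_le_div_rpow_mul_exp {α t x : ℝ} (hα : 0 < α) (ht : 0 < t) (hx : 0 ≤ x) :
    x ^ α ≤ (α / t) ^ α * exp (t * x) := by
  set y := t * x / α
  have hy : 0 ≤ y := by positivity
  have hxy : x = α / t * y := by simp only [y]; field_simp
  calc x ^ α = (α / t) ^ α * y ^ α := by rw [hxy, mul_rpow (by positivity) hy]
    _ ≤ (α / t) ^ α * exp y ^ α := by gcongr; linarith [add_one_le_exp y]
    _ = (α / t) ^ α * exp (t * x) := by
        rw [← exp_mul]; congr 2; simp only [y]; field_simp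

theorem div_one_add_le_one_sub_exp_neg {u : ℝ} (hu : 0 ≤ u) : u / (1 + u) ≤ 1 - exp (-u) := by
  have h : exp (-u) ≤ (1 + u)⁻¹ := by
    rw [exp_neg]; exact inv_anti₀ (by positivity) (by linarith [add_one_le_exp u])
  have : u / (1 + u) = 1 - (1 + u)⁻¹ := by field_simp; ring
  linarith

theorem rpow_tangent_le_rpow {α m x : ℝ} (hα : 1 ≤ α) (hm : 0 < m) (hx : 0 ≤ x) :
    m ^ α * (1 + α * (x / m - 1)) ≤ x ^ α := by
  have h := one_add_mul_self_le_rpow_one_add (s := x / m - 1)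
    (by linarith [div_nonneg hx hm.le]) hα
  rw [add_sub_cancel, div_rpow hx hm.le] at h
  calc m ^ α * (1 + α * (x / m - 1)) ≤ m ^ α * (x ^ α / m ^ α) := by gcongr
    _ = x ^ α := by field_simp

end Real

theorem one_div_rpow_le_tsum_succ_rpow_mul_pow {α q : ℝ} (hα : 1 ≤ α) (hq0 : 0 ≤ q) (hq1 : q < 1)
    (hsum : Summable fun k : ℕ ↦ ((k : ℝ) + 1) ^ α * q ^ k) :
    1 / (1 - q) ^ (α + 1) ≤ ∑' k : ℕ, ((k : ℝ) + 1) ^ α * q ^ k := by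
  set m := (1 - q)⁻¹
  have hm : 0 < m := inv_pos.mpr (by linarith)
  have hgeom : HasSum (fun k : ℕ ↦ q ^ k) m := hasSum_geometric_of_lt_one hq0 hq1
  have hsucc : HasSum (fun k : ℕ ↦ ((k : ℝ) + 1) * q ^ k) (m ^ 2) := by
    simpa [m] using hasSum_succ_mul_geometric_of_norm_lt_one (r := q) (by rwa [norm_of_nonneg hq0])
  have htangent := (hgeom.mul_left (m ^ α * (1 - α))).add (hsucc.mul_left (m ^ α * α / m))
  have hterm (k : ℕ) : m ^ α * (1 - α) * q ^ k + m ^ α * α / m * (((k : ℝ) + 1) * q ^ k) ≤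
      ((k : ℝ) + 1) ^ α * q ^ k := calc
    _ = m ^ α * (1 + α * (((k : ℝ) + 1) / m - 1)) * q ^ k := by field_simp; ring
    _ ≤ ((k : ℝ) + 1) ^ α * q ^ k := by gcongr; exact rpow_tangent_le_rpow hα hm (by positivity)
  calc 1 / (1 - q) ^ (α + 1) = m ^ α * (1 - α) * m + m ^ α * α / m * m ^ 2 := by
        rw [one_div, ← inv_rpow (by linarith), rpow_add_one hm.ne']; field_simp; ring
    _ ≤ ∑' k : ℕ, ((k : ℝ) + 1) ^ α * q ^ k := hasSum_le hterm htangent hsum.hasSum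

theorem one_add_sq_rpow_mul_pow_le {s q : ℝ} (hs : 0 < s) (hq0 : 0 ≤ q) (hq1 : q < 1) (k : ℕ) :
    (1 + ((k : ℝ) + 1) ^ 2) ^ s * q ^ k ≤
      exp (1 / 2) * (8 * s) ^ (2 * s) / (1 - q) ^ (2 * s) * exp (-((1 - q) / 2)) ^ k := by
  set l := 1 - q
  have hl : 0 < l := by simp only [l]; linarith
  set x : ℝ := (k : ℝ) + 1
  have hx : 1 ≤ x := by simp [x]
  have hweight : (1 + x ^ 2) ^ s ≤ (8 * s) ^ (2 * s) / l ^ (2 * s) * exp (l * x / 2) :=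
    calc (1 + x ^ 2) ^ s ≤ ((2 * x) ^ 2) ^ s := by gcongr; nlinarith
      _ = (2 * x) ^ (2 * s) := by
        rw [← rpow_natCast, ← rpow_mul (by positivity)]; norm_num
      _ ≤ (2 * s / (l / 4)) ^ (2 * s) * exp (l / 4 * (2 * x)) :=
        rpow_le_div_rpow_mul_exp (by positivity) (by positivity) (by positivity)
      _ = (8 * s) ^ (2 * s) / l ^ (2 * s) * exp (l * x / 2) := by
        rw [← div_rpow (by positivity) hl.le]; ring_nf
  have hpow : q ^ k ≤ exp (-l) ^ k :=
    pow_le_pow_left₀ hq0 (by linarith [one_sub_le_exp_neg l]) k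
  calc (1 + x ^ 2) ^ s * q ^ k
      ≤ (8 * s) ^ (2 * s) / l ^ (2 * s) * exp (l * x / 2) * exp (-l) ^ k := by gcongr
    _ = exp (l / 2) * (8 * s) ^ (2 * s) / l ^ (2 * s) * exp (-(l / 2)) ^ k := by
        rw [← exp_nat_mul, ← exp_nat_mul]
        have : exp (l * x / 2) * exp (k * -l) = exp (l / 2) * exp (k * -(l / 2)) := by
          rw [← exp_add, ← exp_add]; congr 1; simp only [x]; ring
        linear_combination (8 * s) ^ (2 * s) / l ^ (2 * s) * this
    _ ≤ exp (1 / 2) * (8 * s) ^ (2 * s) / l ^ (2 * s) * exp (-(l / 2)) ^ k := by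
        gcongr; linarith

theorem summable_one_add_sq_rpow_mul_pow {s q : ℝ} (hs : 0 < s) (hq0 : 0 ≤ q) (hq1 : q < 1) :
    Summable fun k : ℕ ↦ (1 + ((k : ℝ) + 1) ^ 2) ^ s * q ^ k := by
  refine .of_nonneg_of_le (fun k ↦ by positivity) (one_add_sq_rpow_mul_pow_le hs hq0 hq1) ?_
  exact (summable_geometric_of_lt_one (exp_pos _).le (exp_lt_one_iff.mpr (by linarith))).mul_left _

theorem tsum_one_add_sq_rpow_mul_pow_le {s q : ℝ} (hs : 0 < s) (hq0 : 0 ≤ q) (hq1 : q < 1) :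
    ∑' k : ℕ, (1 + ((k : ℝ) + 1) ^ 2) ^ s * q ^ k ≤
      3 * exp (1 / 2) * (8 * s) ^ (2 * s) / (1 - q) ^ (2 * s + 1) := by
  set l := 1 - q
  have hl : 0 < l := by simp only [l]; linarith
  set r := exp (-(l / 2))
  have hr1 : r < 1 := exp_lt_one_iff.mpr (by linarith)
  have hgap : l / 3 ≤ 1 - r := calc
    l / 3 ≤ l / 2 / (1 + l / 2) := by rw [le_div_iff₀ (by positivity)]; nlinarith
    _ ≤ 1 - r := div_one_add_le_one_sub_exp_neg (by positivity)
  set K := exp (1 / 2) * (8 * s) ^ (2 * s) / l ^ (2 * s)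
  calc ∑' k : ℕ, (1 + ((k : ℝ) + 1) ^ 2) ^ s * q ^ k ≤ ∑' k : ℕ, K * r ^ k :=
        (summable_one_add_sq_rpow_mul_pow hs hq0 hq1).tsum_le_tsum
          (one_add_sq_rpow_mul_pow_le hs hq0 hq1)
          ((summable_geometric_of_lt_one (exp_pos _).le hr1).mul_left _)
    _ = K * (1 - r)⁻¹ := by rw [tsum_mul_left, tsum_geometric_of_lt_one (exp_pos _).le hr1]
    _ ≤ K * (l / 3)⁻¹ := by gcongr
    _ = 3 * exp (1 / 2) * (8 * s) ^ (2 * s) / l ^ (2 * s + 1) := by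
        rw [rpow_add_one hl.ne']; simp only [K]; field_simp

theorem one_div_rpow_le_tsum_one_add_sq_rpow_mul_pow {s q : ℝ} (hs : 1 / 2 ≤ s) (hq0 : 0 ≤ q)
    (hq1 : q < 1) :
    1 / (1 - q) ^ (2 * s + 1) ≤ ∑' k : ℕ, (1 + ((k : ℝ) + 1) ^ 2) ^ s * q ^ k := by
  have hle (k : ℕ) : ((k : ℝ) + 1) ^ (2 * s) * q ^ k ≤ (1 + ((k : ℝ) + 1) ^ 2) ^ s * q ^ k := by
    rw [rpow_mul (by positivity), rpow_two]; gcongr; linarith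
  have hsum := summable_one_add_sq_rpow_mul_pow (s := s) (by linarith) hq0 hq1
  have hsum' : Summable fun k : ℕ ↦ ((k : ℝ) + 1) ^ (2 * s) * q ^ k :=
    .of_nonneg_of_le (fun k ↦ by positivity) hle hsum
  exact (one_div_rpow_le_tsum_succ_rpow_mul_pow (by linarith) hq0 hq1 hsum').trans
    (hsum'.tsum_le_tsum hle hsum)

theorem norm_sq_hardyCoef_succ (a b p : ℂ) (k : ℕ) :
    ‖hardyCoef a b p (k + 1)‖ ^ 2 = ‖a + b * p‖ ^ 2 * (‖p‖ ^ 2) ^ k := by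
  simp only [hardyCoef, Nat.add_one_ne_zero, if_false, Nat.add_sub_cancel, norm_mul, norm_pow]
  ring

theorem hasSum_mul_norm_sq_hardyCoef (a b p : ℂ) {w : ℕ → ℝ} (hw : w 0 = 0) {T : ℝ}
    (hT : HasSum (fun k ↦ w (k + 1) * (‖p‖ ^ 2) ^ k) T) :
    HasSum (fun k ↦ w k * ‖hardyCoef a b p k‖ ^ 2) (‖a + b * p‖ ^ 2 * T) := by
  rw [← hasSum_nat_add_iff' 1, Finset.sum_range_one, hw, zero_mul, sub_zero]
  simp only [norm_sq_hardyCoef_succ, mul_left_comm (w _)]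
  exact hT.mul_left _

/-- Explicit computation of the homogeneous `Ḣ^{1/2}` norm and two-sided
`H^s` bounds for the coefficients of `(a e^{ix}+b)/(1-p e^{ix})`, `|p| < 1`. -/
theorem statement10 :
    (∀ a b p : ℂ, ‖p‖ < 1 →
      (∑' k : ℕ, (k : ℝ) * ‖hardyCoef a b p k‖ ^ 2)
        = ‖a + b * p‖ ^ 2 / (1 - ‖p‖ ^ 2) ^ 2) ∧
    ∀ s : ℝ, 1 / 2 < s → ∃ c : ℝ, 0 < c ∧ ∃ C : ℝ, 0 < C ∧
      ∀ a b p : ℂ, ‖p‖ < 1 →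
        c * (‖a + b * p‖ ^ 2 / (1 - ‖p‖ ^ 2) ^ (2 * s + 1)) ≤
          (∑' k : ℕ, if k = 0 then 0 else
            (1 + (k : ℝ) ^ 2) ^ s * ‖hardyCoef a b p k‖ ^ 2) ∧
        (∑' k : ℕ, if k = 0 then 0 else
            (1 + (k : ℝ) ^ 2) ^ s * ‖hardyCoef a b p k‖ ^ 2) ≤
          C * (‖a + b * p‖ ^ 2 / (1 - ‖p‖ ^ 2) ^ (2 * s + 1)) := by
  refine ⟨fun a b p hp ↦ ?_, fun s hs ↦ ?_⟩
  · have hq : ‖‖p‖ ^ 2‖ < 1 := by simpa using pow_lt_one₀ (norm_nonneg p) hp two_ne_zero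
    have h := hasSum_mul_norm_sq_hardyCoef a b p (w := fun k ↦ (k : ℝ)) Nat.cast_zero
      (by simpa using hasSum_succ_mul_geometric_of_norm_lt_one hq)
    rw [h.tsum_eq, div_eq_mul_inv]
  refine ⟨1, one_pos, 3 * exp (1 / 2) * (8 * s) ^ (2 * s), by positivity, fun a b p hp ↦ ?_⟩
  have hq0 : 0 ≤ ‖p‖ ^ 2 := by positivity
  have hq1 : ‖p‖ ^ 2 < 1 := pow_lt_one₀ (norm_nonneg p) hp two_ne_zero
  have h := hasSum_mul_norm_sq_hardyCoef a b p
    (w := fun k ↦ if k = 0 then 0 else (1 + (k : ℝ) ^ 2) ^ s) (if_pos rfl)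
    (by simpa using (summable_one_add_sq_rpow_mul_pow (by linarith) hq0 hq1).hasSum)
  simp only [ite_mul, zero_mul] at h
  rw [h.tsum_eq, one_mul, div_eq_mul_one_div, mul_left_comm]
  constructor
  · gcongr
    exact one_div_rpow_le_tsum_one_add_sq_rpow_mul_pow hs.le hq0 hq1
  · gcongr
    exact (tsum_one_add_sq_rpow_mul_pow_le (by linarith) hq0 hq1).trans_eq (by ring)
end
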